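/- Let μ be the shift-invariant Markov measure on X^ℕ defined by an irreducible stochastic matrix L with stationary probability vector l, and g : X^ℕ → X^ℕ an invertible transformation generated by an L-strongly connected Mealy automaton A = (X, S, π, λ) with initial state g ∈ S. Then g_*μ = μ if and only if: l_{x'} = l_x whenever λ(g, x) = x', and L_{x'y'} = L_{xy} whenever λ(s, xy) = x'y' for some s ∈ S. -/

import Mathlib

open MeasureTheory Filter Topology
open scoped ENNReal

namespace AutoMarkov

variable {X : Type*} {S : Type*}

/-- The cylinder set of sequences starting with the finite word `w`. -/
def cylinder (w : List X) : Set (ℕ → X) :=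
  {ω | ∀ i : Fin w.length, ω i = w.get i}

/-- Product of transition probabilities `L x y₁ * L y₁ y₂ * ⋯` along a word. -/
noncomputable def chainWeight (L : X → X → ℝ≥0∞) : X → List X → ℝ≥0∞
  | _, [] => 1
  | x, y :: v => L x y * chainWeight L y v

/-- The Markov weight `l_{x₁} L_{x₁x₂} ⋯ L_{x_{n-1}x_n}` of a finite word. -/
noncomputable def cylWeight (l : X → ℝ≥0∞) (L : X → X → ℝ≥0∞) : List X → ℝ≥0∞
  | [] => 1
  | x :: v => l x * chainWeight L x v

/-- The one-sided shift on sequences. -/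
def shift : (ℕ → X) → ℕ → X := fun ω n => ω (n + 1)

/-- Extension of the transition function of a Mealy automaton to finite words. -/
def piExt (πf : S → X → S) : S → List X → S
  | s, [] => s
  | s, x :: w => piExt πf (πf s x) w

/-- Extension of the output function of a Mealy automaton to finite words. -/
def lamExt (πf : S → X → S) (lam : S → X → X) : S → List X → List X
  | _, [] => []
  | s, x :: w => lam s x :: lamExt πf lam (πf s x) w

/-- The action of the state `g` of a Mealy automaton on infinite sequences. -/
def autAct (πf : S → X → S) (lam : S → X → X) (g : S) : (ℕ → X) → ℕ → X :=
  fun ω n => lam (piExt πf g (List.ofFn fun i : Fin n => ω i)) (ω n)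

/-- The matrix `T = T_{L,A}` on `S × X`. -/
noncomputable def Tmat [DecidableEq S] (πf : S → X → S) (L : X → X → ℝ≥0∞) :
    S × X → S × X → ℝ≥0∞ :=
  fun p q => if πf p.1 p.2 = q.1 then L p.2 q.2 else 0

/-- The matrix `K = K_{l,A}` on `S`. -/
noncomputable def Kmat [Fintype X] [DecidableEq S] (πf : S → X → S) (l : X → ℝ≥0∞) :
    S → S → ℝ≥0∞ :=
  fun s₀ s₁ => ∑ x : X, if πf s₀ x = s₁ then l x else 0

/-- The automaton is strongly connected: any state is reachable from any state. -/
def StronglyConnected (πf : S → X → S) : Prop :=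
  ∀ s r : S, ∃ w : List X, piExt πf s w = r

/-- The automaton is `L`-strongly connected. -/
def LStronglyConnected (πf : S → X → S) (L : X → X → ℝ≥0∞) : Prop :=
  ∀ s r : S, ∀ x y : X, ∃ w : List X,
    piExt πf s (x :: w) = r ∧ chainWeight L x (w ++ [y]) ≠ 0

/-- Irreducibility of a stochastic matrix: positive-probability path between any
two symbols. -/
def IrreducibleMat (L : X → X → ℝ≥0∞) : Prop :=
  ∀ x y : X, ∃ v : List X, chainWeight L x (v ++ [y]) ≠ 0

/-- The automaton is reversible: every state has a unique `x`-predecessor. -/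
def Reversible (πf : S → X → S) : Prop :=
  ∀ (s : S) (x : X), ∃! s₀ : S, πf s₀ x = s

section Aux
variable (πf : S → X → S) (lam : S → X → X)

lemma lamExt_length : ∀ (s : S) (v : List X), (lamExt πf lam s v).length = v.length
  | _, [] => rfl
  | s, x :: w => by simp [lamExt, lamExt_length]

lemma piExt_append : ∀ (u v : List X) (s : S), piExt πf s (u ++ v) = piExt πf (piExt πf s u) v
  | [], v, s => rfl
  | x :: u, v, s => by simp [piExt, piExt_append]

lemma lamExt_append : ∀ (u v : List X) (s : S),
    lamExt πf lam s (u ++ v) = lamExt πf lam s u ++ lamExt πf lam (piExt πf s u) v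
  | [], v, s => rfl
  | x :: u, v, s => by simp [lamExt, piExt, lamExt_append]

end Aux

section Weights
variable {L : X → X → ℝ≥0∞} {l : X → ℝ≥0∞}

lemma L_le_one [Fintype X] (hL : ∀ x, ∑ y : X, L x y = 1) (x y : X) : L x y ≤ 1 := by
  rw [← hL x]
  exact Finset.single_le_sum (f := fun y => L x y) (fun _ _ => zero_le) (Finset.mem_univ y)

lemma chainWeight_le_one [Fintype X] (hL : ∀ x, ∑ y : X, L x y = 1) :
    ∀ (x : X) (u : List X), chainWeight L x u ≤ 1
  | _, [] => le_refl 1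
  | x, y :: v => by
      calc L x y * chainWeight L y v ≤ 1 * 1 :=
        mul_le_mul' (L_le_one hL x y) (chainWeight_le_one hL y v)
      _ = 1 := one_mul 1

lemma chainWeight_snoc (x y : X) (d : X) :
    ∀ u : List X, chainWeight L x (u ++ [y]) = chainWeight L x u * L (u.getLastD x) y
  | [] => by simp [chainWeight]
  | z :: v => by
      show L x z * chainWeight L z (v ++ [y]) = _
      rw [chainWeight_snoc z y d v, List.getLastD_cons]
      show _ = chainWeight L x (z :: v) * _
      simp only [chainWeight, mul_assoc]

lemma cylWeight_snoc (y : X) : ∀ (u : List X), u ≠ [] →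
    cylWeight l L (u ++ [y]) = cylWeight l L u * L (u.getLastD y) y
  | [], h => absurd rfl h
  | x :: v, _ => by
      show l x * chainWeight L x (v ++ [y]) = _
      rw [chainWeight_snoc x y y v, List.getLastD_cons]
      show _ = cylWeight l L (x :: v) * _
      simp only [cylWeight, mul_assoc]

end Weights

section Words
variable (πf : S → X → S) (lam : S → X → X)

def firstn (ω : ℕ → X) (n : ℕ) : List X := List.ofFn fun i : Fin n => ω i

@[simp] lemma firstn_length (ω : ℕ → X) (n : ℕ) : (firstn ω n).length = n := by
  simp [firstn]

lemma mem_cylinder (w : List X) (ω : ℕ → X) :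
    ω ∈ cylinder w ↔ firstn ω w.length = w := by
  constructor
  · intro h
    apply List.ext_get (by simp)
    intro i h1 h2
    simpa [firstn] using h ⟨i, h2⟩
  · intro h i
    simpa [firstn] using (List.get_of_eq h.symm i).symm

lemma firstn_succ (ω : ℕ → X) (n : ℕ) : firstn ω (n + 1) = firstn ω n ++ [ω n] := by
  show List.ofFn _ = _
  rw [List.ofFn_succ']
  simp [firstn, List.concat_eq_append]

lemma firstn_autAct (g : S) (ω : ℕ → X) :
    ∀ n, firstn (autAct πf lam g ω) n = lamExt πf lam g (firstn ω n)
  | 0 => rfl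
  | n + 1 => by
      rw [firstn_succ, firstn_succ, lamExt_append, firstn_autAct g ω n]
      rfl

lemma exists_word [Nonempty X] (g : S) (hsurj : Function.Surjective (autAct πf lam g))
    (w : List X) :
    ∃ v : List X, v.length = w.length ∧ lamExt πf lam g v = w := by
  classical
  obtain ⟨ω, hω⟩ := hsurj
    (fun i => if h : i < w.length then w.get ⟨i, h⟩ else Classical.arbitrary X)
  refine ⟨firstn ω w.length, firstn_length _ _, ?_⟩
  rw [← firstn_autAct, hω]
  apply List.ext_get (by simp)
  intro i h1 h2
  simp [firstn, h2]

lemma lamExt_inj [Finite X] [Nonempty X] (g : S)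
    (hsurj : Function.Surjective (autAct πf lam g))
    {v v' : List X} (hlen : v.length = v'.length)
    (h : lamExt πf lam g v = lamExt πf lam g v') : v = v' := by
  classical
  set n := v.length with hn
  have hF : ∀ a : Fin n → X, (lamExt πf lam g (List.ofFn a)).length = n := fun a => by
    simp [lamExt_length]
  let F : (Fin n → X) → (Fin n → X) :=
    fun a i => (lamExt πf lam g (List.ofFn a)).get (Fin.cast (hF a).symm i)
  have hofF : ∀ a, List.ofFn (F a) = lamExt πf lam g (List.ofFn a) := by
    intro a
    apply List.ext_get (by simp [hF a])
    intro i h1 h2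
    simp [F]
  have hFsurj : Function.Surjective F := by
    intro t
    obtain ⟨v₀, hlen₀, hv₀⟩ := exists_word πf lam g hsurj (List.ofFn t)
    have hlen₀' : v₀.length = n := by simpa using hlen₀
    refine ⟨fun i => v₀.get (Fin.cast hlen₀'.symm i), ?_⟩
    apply List.ofFn_injective
    rw [hofF]
    have : List.ofFn (fun i => v₀.get (Fin.cast hlen₀'.symm i)) = v₀ := by
      apply List.ext_get (by simp [hlen₀'])
      intro i h1 h2
      simp
    rw [this, hv₀]
  have hFinj : Function.Injective F := Finite.injective_iff_surjective.mpr hFsurj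
  have hv : List.ofFn (fun i : Fin n => v.get (Fin.cast rfl i)) = v := by
    apply List.ext_get (by simp [hn])
    intro i h1 h2
    simp
  have hv' : List.ofFn (fun i : Fin n => v'.get (Fin.cast hlen i)) = v' := by
    apply List.ext_get (by simp [hlen])
    intro i h1 h2
    simp
  have : F (fun i : Fin n => v.get (Fin.cast rfl i)) =
      F (fun i : Fin n => v'.get (Fin.cast hlen i)) := by
    apply List.ofFn_injective
    rw [hofF, hofF, hv, hv', h]
  have := hFinj this
  rw [← hv, ← hv', this]

lemma preimage_cylinder_eq [Finite X] [Nonempty X] (g : S)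
    (hsurj : Function.Surjective (autAct πf lam g)) (v : List X) :
    autAct πf lam g ⁻¹' cylinder (lamExt πf lam g v) = cylinder v := by
  ext ω
  rw [Set.mem_preimage, mem_cylinder, mem_cylinder, firstn_autAct, lamExt_length]
  constructor
  · intro h
    exact lamExt_inj πf lam g hsurj (by simp) h
  · intro h
    rw [h]

end Words

section Meas
variable [MeasurableSpace X] [MeasurableSingletonClass X]

lemma cylinder_nil : cylinder ([] : List X) = Set.univ := by
  ext ω
  simp [cylinder]

lemma measurableSet_cylinder (w : List X) : MeasurableSet (cylinder w) := by
  have : cylinder w = ⋂ i : Fin w.length, (fun ω : ℕ → X => ω i) ⁻¹' {w.get i} := by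
    ext ω
    simp [cylinder]
  rw [this]
  exact MeasurableSet.iInter fun i => (measurable_pi_apply _) (measurableSet_singleton _)

lemma cylinder_inter_of_le {w1 w2 : List X} (h : w1.length ≤ w2.length)
    {ω0 : ℕ → X} (h1 : ω0 ∈ cylinder w1) (h2 : ω0 ∈ cylinder w2) :
    cylinder w1 ∩ cylinder w2 = cylinder w2 := by
  apply subset_antisymm Set.inter_subset_right
  intro ω hω
  refine ⟨fun i => ?_, hω⟩
  have hi : (i : ℕ) < w2.length := lt_of_lt_of_le i.isLt h
  have e1 : ω0 (i : ℕ) = w1.get i := h1 i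
  have e2 : ω0 (i : ℕ) = w2.get ⟨i, hi⟩ := h2 ⟨i, hi⟩
  have e3 : ω (i : ℕ) = w2.get ⟨i, hi⟩ := hω ⟨i, hi⟩
  rw [e3, ← e2, e1]

lemma isPiSystem_cylinders :
    IsPiSystem {t : Set (ℕ → X) | ∃ w : List X, t = cylinder w} := by
  rintro t1 ⟨w1, rfl⟩ t2 ⟨w2, rfl⟩ hne
  obtain ⟨ω0, h1, h2⟩ := hne
  rcases le_total w1.length w2.length with h | h
  · exact ⟨w2, cylinder_inter_of_le h h1 h2⟩
  · refine ⟨w1, ?_⟩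
    rw [Set.inter_comm]
    exact cylinder_inter_of_le h h2 h1

lemma generateFrom_cylinders [Finite X] :
    (inferInstance : MeasurableSpace (ℕ → X)) =
      MeasurableSpace.generateFrom {t : Set (ℕ → X) | ∃ w : List X, t = cylinder w} := by
  apply le_antisymm
  · apply iSup_le
    intro i
    rintro t ⟨s, _, rfl⟩
    have heq : (fun ω : ℕ → X => ω i) ⁻¹' s =
        ⋃ (a : Fin (i + 1) → X) (_ : a (Fin.last i) ∈ s), cylinder (List.ofFn a) := by
      ext ω
      simp only [Set.mem_preimage, Set.mem_iUnion, mem_cylinder, List.length_ofFn]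
      constructor
      · intro hmem
        exact ⟨fun j => ω j, by simpa using hmem, rfl⟩
      · rintro ⟨a, ha, hc⟩
        have : (fun j : Fin (i + 1) => ω (j : ℕ)) = a := List.ofFn_injective hc
        rw [← this] at ha
        simpa using ha
    rw [heq]
    exact MeasurableSet.iUnion fun a => MeasurableSet.iUnion fun _ =>
      MeasurableSpace.measurableSet_generateFrom ⟨List.ofFn a, rfl⟩
  · apply MeasurableSpace.generateFrom_le
    rintro t ⟨w, rfl⟩
    exact measurableSet_cylinder w

end Meas

section WeightsBound
variable {L : X → X → ℝ≥0∞} {l : X → ℝ≥0∞}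

lemma cylWeight_le_one [Fintype X] (hL : ∀ x, ∑ y : X, L x y = 1)
    (hl1 : ∑ x : X, l x = 1) : ∀ u : List X, cylWeight l L u ≤ 1
  | [] => le_refl 1
  | x :: v => by
      have hx : l x ≤ 1 := by
        rw [← hl1]
        exact Finset.single_le_sum (f := fun x => l x) (fun _ _ => zero_le) (Finset.mem_univ x)
      calc l x * chainWeight L x v ≤ 1 * 1 := mul_le_mul' hx (chainWeight_le_one hL x v)
      _ = 1 := one_mul 1

end WeightsBound

theorem stmt18 [Fintype X] [Fintype S]
    [MeasurableSpace X] [MeasurableSingletonClass X]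
    (L : X → X → ℝ≥0∞) (l : X → ℝ≥0∞)
    (hL : ∀ x, ∑ y : X, L x y = 1) (hl1 : ∑ x : X, l x = 1)
    (hstat : ∀ y, ∑ x : X, l x * L x y = l y)
    (hirr : IrreducibleMat L)
    (μ : Measure (ℕ → X)) (hμ : ∀ w : List X, μ (cylinder w) = cylWeight l L w)
    (πf : S → X → S) (lam : S → X → X) (g : S)
    (hconn : LStronglyConnected πf L)
    (hinv : Function.Bijective (autAct πf lam g))
    (hmeas : Measurable (autAct πf lam g)) :
    Measure.map (autAct πf lam g) μ = μ ↔
      ((∀ x : X, l (lam g x) = l x) ∧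
        ∀ (s : S) (x y : X), L (lam s x) (lam (πf s x) y) = L x y) := by
  classical
  have hXne : Nonempty X := by
    by_contra h
    rw [not_nonempty_iff] at h
    rw [Finset.univ_eq_empty, Finset.sum_empty] at hl1
    exact zero_ne_one hl1
  constructor
  · intro hEq
    have key : ∀ u : List X, cylWeight l L (lamExt πf lam g u) = cylWeight l L u := by
      intro u
      have h1 : Measure.map (autAct πf lam g) μ (cylinder (lamExt πf lam g u)) =
          μ (cylinder (lamExt πf lam g u)) := by rw [hEq]
      rw [Measure.map_apply hmeas (measurableSet_cylinder _),
        preimage_cylinder_eq πf lam g hinv.2] at h1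
      rw [← hμ, ← hμ, h1]
    constructor
    · intro x
      have h := key [x]
      simpa [lamExt, cylWeight, chainWeight] using h
    · intro s x y
      obtain ⟨x₀, hx₀⟩ : ∃ x₀ : X, l x₀ ≠ 0 := by
        by_contra h
        push_neg at h
        rw [Finset.sum_congr rfl fun x _ => h x, Finset.sum_const_zero] at hl1
        exact zero_ne_one hl1
      obtain ⟨w, hw1, hw2⟩ := hconn g s x₀ x
      have hc0 : cylWeight l L ((x₀ :: w) ++ [x]) ≠ 0 := by
        show l x₀ * chainWeight L x₀ (w ++ [x]) ≠ 0
        exact mul_ne_zero hx₀ hw2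
      have hcfin : cylWeight l L ((x₀ :: w) ++ [x]) ≠ ⊤ :=
        ((cylWeight_le_one hL hl1 _).trans_lt ENNReal.one_lt_top).ne
      have hp2 : piExt πf g ((x₀ :: w) ++ [x]) = πf s x := by
        rw [piExt_append, hw1]
        rfl
      have hlamu2 : lamExt πf lam g ((x₀ :: w) ++ [x]) =
          lamExt πf lam g (x₀ :: w) ++ [lam s x] := by
        rw [lamExt_append, hw1]
        rfl
      have hA : cylWeight l L (((x₀ :: w) ++ [x]) ++ [y]) =
          cylWeight l L ((x₀ :: w) ++ [x]) * L x y := by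
        rw [cylWeight_snoc y _ (by simp), List.getLastD_concat]
      have hB : cylWeight l L (lamExt πf lam g (((x₀ :: w) ++ [x]) ++ [y])) =
          cylWeight l L (lamExt πf lam g ((x₀ :: w) ++ [x])) *
            L (lam s x) (lam (πf s x) y) := by
        rw [lamExt_append, hp2]
        show cylWeight l L (lamExt πf lam g ((x₀ :: w) ++ [x]) ++ [lam (πf s x) y]) = _
        rw [cylWeight_snoc _ _ (by
          intro hnil
          have := congrArg List.length hnil
          simp [lamExt_length] at this), hlamu2, List.getLastD_concat]
      have e1 := key (((x₀ :: w) ++ [x]) ++ [y])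
      have e2 := key ((x₀ :: w) ++ [x])
      rw [hA, hB, e2] at e1
      exact (ENNReal.mul_right_inj hc0 hcfin).mp e1
  · rintro ⟨hsl, hsL⟩
    have hch : ∀ (u : List X) (s : S) (x : X),
        chainWeight L (lam s x) (lamExt πf lam (πf s x) u) = chainWeight L x u := by
      intro u
      induction u with
      | nil => intro s x; rfl
      | cons y v ih =>
          intro s x
          show L (lam s x) (lam (πf s x) y) *
              chainWeight L (lam (πf s x) y) (lamExt πf lam (πf (πf s x) y) v) =
            L x y * chainWeight L y v
          rw [hsL, ih (πf s x) y]
    have hkey : ∀ u : List X, cylWeight l L (lamExt πf lam g u) = cylWeight l L u := by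
      intro u
      cases u with
      | nil => rfl
      | cons x v =>
          show l (lam g x) * chainWeight L (lam g x) (lamExt πf lam (πf g x) v) =
            l x * chainWeight L x v
          rw [hsl, hch]
    have hsame : ∀ w : List X,
        Measure.map (autAct πf lam g) μ (cylinder w) = μ (cylinder w) := by
      intro w
      obtain ⟨v, hvlen, hv⟩ := exists_word πf lam g hinv.2 w
      rw [← hv, Measure.map_apply hmeas (measurableSet_cylinder _),
        preimage_cylinder_eq πf lam g hinv.2, hμ, hμ, hkey]
    haveI : IsFiniteMeasure μ := by
      constructor
      rw [← cylinder_nil, hμ]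
      exact ENNReal.one_lt_top
    haveI : IsFiniteMeasure (Measure.map (autAct πf lam g) μ) := by
      constructor
      rw [← cylinder_nil, hsame, hμ]
      exact ENNReal.one_lt_top
    apply ext_of_generate_finite _ (generateFrom_cylinders) (isPiSystem_cylinders)
    · rintro t ⟨w, rfl⟩
      exact hsame w
    · rw [← cylinder_nil]
      exact hsame []


end AutoMarkov
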